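/- Let A be a unital complex Banach algebra, τ a trace on A, and ξ : [t₁, t₂] → A a continuously differentiable path with ‖ξ(t) − 1‖ < 1 for all t ∈ [t₁, t₂] (so that each ξ(t) is invertible). Then 2πi · Δ̃_τ(ξ) = τ(log ξ(t₂)) − τ(log ξ(t₁)). -/

import Mathlib

/-! Although `x ↦ (x - 1)ⁿ⁺¹` has the noncommutative derivative `h ↦ Σᵢ (x - 1)ⁱ h (x - 1)ⁿ⁻ⁱ`,
cyclicity of `τ` collapses `τ` of it to `(n + 1) τ(h (x - 1)ⁿ)`. Differentiating the series of
`τ ∘ log` term by term therefore gives `h ↦ Σₙ τ(h (1 - x)ⁿ) = τ(h x⁻¹)`, so `t ↦ τ(log ξ(t))` is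
an antiderivative of `τ(ξ'(t) ξ(t)⁻¹)` and the identity is the fundamental theorem of calculus. -/

/-- The de la Harpe–Skandalis determinant
`Δ̃_τ(ξ) = (1/2πi) ∫_{t₁}^{t₂} τ(ξ′(t) ξ(t)⁻¹) dt` of a path `ξ` with derivative `ξ'`. -/
noncomputable def dhsDet {A : Type*} [NormedRing A] [NormedAlgebra ℂ A] [CompleteSpace A]
    (τ : A →L[ℂ] ℂ) (t₁ t₂ : ℝ) (ξ ξ' : ℝ → A) : ℂ :=
  (2 * (Real.pi : ℂ) * Complex.I)⁻¹ * ∫ t in t₁..t₂, τ (ξ' t * Ring.inverse (ξ t))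

/-- For `‖x - 1‖ < 1`, the logarithm `log x = Σ_{n=1}^∞ (-1)^{n+1} (x-1)ⁿ / n`,
written here with the summation index shifted by one. -/
noncomputable def balog {A : Type*} [NormedRing A] [NormedAlgebra ℂ A] [CompleteSpace A]
    (x : A) : A :=
  ∑' n : ℕ, (((-1 : ℂ) ^ n) * ((n : ℂ) + 1)⁻¹) • (x - 1) ^ (n + 1)

theorem norm_mul_pow_le {R : Type*} [SeminormedRing R] (a b : R) (n : ℕ) :
    ‖a * b ^ n‖ ≤ ‖a‖ * ‖b‖ ^ n := by
  induction n with
  | zero => simp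
  | succ n ih =>
    calc ‖a * b ^ (n + 1)‖ = ‖a * b ^ n * b‖ := by rw [pow_succ, mul_assoc]
      _ ≤ ‖a * b ^ n‖ * ‖b‖ := norm_mul_le _ _
      _ ≤ ‖a‖ * ‖b‖ ^ n * ‖b‖ := by gcongr
      _ = ‖a‖ * ‖b‖ ^ (n + 1) := by rw [pow_succ, mul_assoc]

theorem ContinuousOn.ring_inverse {X R : Type*} [TopologicalSpace X] [NormedRing R]
    [HasSummableGeomSeries R] {f : X → R} {s : Set X} (hf : ContinuousOn f s)
    (hunit : ∀ x ∈ s, IsUnit (f x)) : ContinuousOn (fun x => Ring.inverse (f x)) s := by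
  intro x hx
  obtain ⟨u, hu⟩ := hunit x hx
  exact (hu ▸ NormedRing.inverse_continuousAt u).comp_continuousWithinAt (hf x hx)

theorem intervalIntegral.integral_eq_sub_of_hasDerivWithinAt_Icc {E : Type*}
    [NormedAddCommGroup E] [NormedSpace ℝ E] [CompleteSpace E] {f f' : ℝ → E} {a b : ℝ}
    (hab : a ≤ b) (hderiv : ∀ x ∈ Set.Icc a b, HasDerivWithinAt f (f' x) (Set.Icc a b) x)
    (hint : IntervalIntegrable f' MeasureTheory.volume a b) :
    ∫ x in a..b, f' x = f b - f a :=
  integral_eq_sub_of_hasDeriv_right_of_le hab (fun x hx => (hderiv x hx).continuousWithinAt)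
    (fun x hx => ((hderiv x (Set.Ioo_subset_Icc_self hx)).hasDerivAt
      (Icc_mem_nhds hx.1 hx.2)).hasDerivWithinAt) hint

theorem hasFDerivAt_trace_pow {𝕜 A F : Type*} [NontriviallyNormedField 𝕜] [NormedRing A]
    [NormedAlgebra 𝕜 A] [NormedAddCommGroup F] [NormedSpace 𝕜 F]
    (τ : A →L[𝕜] F) (hτ : ∀ a b, τ (a * b) = τ (b * a)) (n : ℕ) (x : A) :
    HasFDerivAt (fun y => τ (y ^ (n + 1)))
      (((n : 𝕜) + 1) • τ.comp ((ContinuousLinearMap.mul 𝕜 A).flip (x ^ n))) x := by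
  refine (τ.hasFDerivAt.comp x (hasFDerivAt_pow' (n + 1))).congr_fderiv ?_
  ext h
  have hcyc : ∀ i ∈ Finset.range (n + 1), τ (x ^ (n - i) * h * x ^ i) = τ (h * x ^ n) := by
    intro i hi
    rw [mul_assoc, hτ, mul_assoc, ← pow_add, Nat.add_sub_cancel' (Finset.mem_range_succ_iff.mp hi)]
  simp only [ContinuousLinearMap.comp_apply, FunLike.coe_sum, Finset.sum_apply,
    map_sum, FunLike.coe_smul, Pi.smul_apply, ContinuousLinearMap.id_apply,
    MulOpposite.smul_eq_mul_unop, MulOpposite.unop_op, smul_eq_mul, Nat.pred_eq_sub_one,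
    Nat.add_sub_cancel, ContinuousLinearMap.flip_apply, ContinuousLinearMap.mul_apply']
  rw [Finset.sum_congr rfl hcyc, Finset.sum_const, Finset.card_range, ← Nat.cast_smul_eq_nsmul 𝕜]
  push_cast
  rfl

theorem summable_balog_series {A : Type*} [NormedRing A] [NormedAlgebra ℂ A] [CompleteSpace A]
    {x : A} (hx : ‖x - 1‖ < 1) :
    Summable fun n : ℕ => (((-1 : ℂ) ^ n) * ((n : ℂ) + 1)⁻¹) • (x - 1) ^ (n + 1) := by
  refine Summable.of_norm_bounded (summable_geometric_of_lt_one (norm_nonneg _) hx) fun n => ?_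
  have hcoeff : ‖((-1 : ℂ) ^ n) * ((n : ℂ) + 1)⁻¹‖ ≤ 1 := by
    rw [norm_mul, norm_pow, norm_neg, norm_one, one_pow, one_mul, norm_inv]
    exact inv_le_one_of_one_le₀ (by exact_mod_cast Nat.le_add_left 1 n)
  calc _ ≤ 1 * ‖(x - 1) ^ (n + 1)‖ := (norm_smul_le _ _).trans (by gcongr)
    _ ≤ ‖x - 1‖ ^ (n + 1) := by rw [one_mul]; exact norm_pow_le' _ n.succ_pos
    _ ≤ ‖x - 1‖ ^ n := pow_le_pow_of_le_one (norm_nonneg _) hx.le n.le_succ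

theorem hasFDerivAt_trace_balog_term {A F : Type*} [NormedRing A] [NormedAlgebra ℂ A]
    [NormedAddCommGroup F] [NormedSpace ℂ F] (τ : A →L[ℂ] F) (hτ : ∀ a b, τ (a * b) = τ (b * a))
    (n : ℕ) (x : A) :
    HasFDerivAt (fun y => τ ((((-1 : ℂ) ^ n) * ((n : ℂ) + 1)⁻¹) • (y - 1) ^ (n + 1)))
      (τ.comp ((ContinuousLinearMap.mul ℂ A).flip ((1 - x) ^ n))) x := by
  have h := ((hasFDerivAt_trace_pow τ hτ n (x - 1)).comp x
    ((hasFDerivAt_id x).sub_const 1)).const_smul (((-1 : ℂ) ^ n) * ((n : ℂ) + 1)⁻¹)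
  refine (h.congr_fderiv ?_).congr_of_eventuallyEq (.of_forall fun y => map_smul τ _ _)
  ext h
  have hn : (n : ℂ) + 1 ≠ 0 := by exact_mod_cast n.succ_ne_zero
  have hneg : (1 - x) ^ n = ((-1 : ℂ) ^ n) • (x - 1) ^ n := by
    rw [← smul_pow, neg_one_smul, neg_sub]
  simp [hneg, smul_smul, hn]

theorem hasFDerivAt_trace_balog {A F : Type*} [NormedRing A] [NormedAlgebra ℂ A]
    [CompleteSpace A] [NormedAddCommGroup F] [NormedSpace ℂ F] [CompleteSpace F]
    (τ : A →L[ℂ] F) (hτ : ∀ a b, τ (a * b) = τ (b * a)) {x : A} (hx : ‖x - 1‖ < 1) :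
    HasFDerivAt (fun y => τ (balog y))
      (τ.comp ((ContinuousLinearMap.mul ℂ A).flip (Ring.inverse x))) x := by
  obtain ⟨r, hxr, hr1⟩ := exists_between hx
  have hr0 : 0 ≤ r := (norm_nonneg _).trans hxr.le
  have hbound : ∀ (n : ℕ), ∀ y ∈ Metric.ball (1 : A) r,
      ‖τ.comp ((ContinuousLinearMap.mul ℂ A).flip ((1 - y) ^ n))‖ ≤ ‖τ‖ * r ^ n := by
    intro n y hy
    rw [mem_ball_iff_norm'] at hy
    refine ContinuousLinearMap.opNorm_le_bound _ (by positivity) fun h => ?_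
    calc ‖τ (h * (1 - y) ^ n)‖ ≤ ‖τ‖ * (‖h‖ * ‖1 - y‖ ^ n) :=
          (τ.le_opNorm _).trans (by gcongr; exact norm_mul_pow_le _ _ _)
      _ ≤ ‖τ‖ * r ^ n * ‖h‖ := by
          rw [mul_comm ‖h‖, ← mul_assoc]; gcongr
  have hseries := hasFDerivAt_tsum_of_isPreconnected
    ((summable_geometric_of_lt_one hr0 hr1).mul_left ‖τ‖) Metric.isOpen_ball
    (convex_ball (1 : A) r).isPreconnected (fun n y _ => hasFDerivAt_trace_balog_term τ hτ n y)
    hbound (Metric.mem_ball_self ((norm_nonneg _).trans_lt hxr)) (by simp)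
    (mem_ball_iff_norm.2 hxr)
  have hgeom : HasSum (fun n => (1 - x) ^ n) (Ring.inverse x) := by
    have hx' : ‖1 - x‖ < 1 := by rwa [norm_sub_rev]
    simpa [geom_series_eq_inverse _ hx'] using (summable_geometric_of_norm_lt_one hx').hasSum
  have hderiv := hgeom.mapL
    ((ContinuousLinearMap.compL ℂ A A F τ).comp (ContinuousLinearMap.mul ℂ A).flip)
  refine (hseries.congr_fderiv hderiv.tsum_eq).congr_of_eventuallyEq ?_
  filter_upwards [Metric.isOpen_ball.mem_nhds (mem_ball_iff_norm.2 hx)] with y hy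
  exact τ.map_tsum (summable_balog_series (mem_ball_iff_norm.1 hy))

/-- If `ξ` is a continuously differentiable path with `‖ξ(t) - 1‖ < 1` for all `t`
(so each `ξ(t)` is invertible), then `2πi · Δ̃_τ(ξ) = τ(log ξ(t₂)) - τ(log ξ(t₁))`. -/
theorem statement3 {A : Type*} [NormedRing A] [NormedAlgebra ℂ A] [CompleteSpace A]
    (τ : A →L[ℂ] ℂ) (hτ : ∀ a b : A, τ (a * b) = τ (b * a))
    (t₁ t₂ : ℝ) (ht : t₁ ≤ t₂) (ξ ξ' : ℝ → A)
    (hd : ∀ t ∈ Set.Icc t₁ t₂, HasDerivWithinAt ξ (ξ' t) (Set.Icc t₁ t₂) t)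
    (hc : ContinuousOn ξ' (Set.Icc t₁ t₂))
    (hnorm : ∀ t ∈ Set.Icc t₁ t₂, ‖ξ t - 1‖ < 1) :
    2 * (Real.pi : ℂ) * Complex.I * dhsDet τ t₁ t₂ ξ ξ' =
      τ (balog (ξ t₂)) - τ (balog (ξ t₁)) := by
  have hderiv : ∀ t ∈ Set.Icc t₁ t₂, HasDerivWithinAt (fun s => τ (balog (ξ s)))
      (τ (ξ' t * Ring.inverse (ξ t))) (Set.Icc t₁ t₂) t := fun t ht =>
    ((hasFDerivAt_trace_balog τ hτ (hnorm t ht)).restrictScalars ℝ).comp_hasDerivWithinAt t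
      (hd t ht)
  have hunit : ∀ t ∈ Set.Icc t₁ t₂, IsUnit (ξ t) := fun t ht => by
    simpa using isUnit_one_sub_of_norm_lt_one (x := 1 - ξ t)
      (by rw [norm_sub_rev]; exact hnorm t ht)
  have hint : IntervalIntegrable (fun t => τ (ξ' t * Ring.inverse (ξ t)))
      MeasureTheory.volume t₁ t₂ := by
    refine ContinuousOn.intervalIntegrable ?_
    rw [Set.uIcc_of_le ht]
    exact τ.continuous.comp_continuousOn
      (hc.mul (ContinuousOn.ring_inverse (fun t ht => (hd t ht).continuousWithinAt) hunit))
  rw [dhsDet, ← mul_assoc, mul_inv_cancel₀ Complex.two_pi_I_ne_zero, one_mul]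
  exact intervalIntegral.integral_eq_sub_of_hasDerivWithinAt_Icc ht hderiv hint
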